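/- Let (V,d,b) be an acyclic information network, T ≥ 1, and let k, k̂ ∈ ℕ. Consider any run of the Standard Greedy Algorithm: starting from (A_0, Â_0) = (∅, ∅), at each step choose among all feasible single additions (adding one node w ∈ (V\{d}) \ (A_i ∪ Â_i) to A_i provided |A_i| < k, or to Â_i provided |Â_i| < k̂) one that maximizes the resulting value of σ̄, and stop when no feasible addition remains (after min(k + k̂, |V| − 1)-bounded steps), producing (A*, Â*). Then σ̄(A*, Â*) ≥ (1/2) · max{ σ̄(A, Â) : A, Â ⊆ V\{d} disjoint, |A| ≤ k, |Â| ≤ k̂ }. -/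

import Mathlib

open MeasureTheory

/-- An information network: a finite node set `V` with a distinguished void node `d`
and a row-stochastic weight matrix `b` with entries in `[0,1]` and `b d d = 1`. -/
structure InfoNetwork (V : Type*) [Fintype V] where
  d : V
  b : V → V → ℝ
  b_nonneg : ∀ v u, 0 ≤ b v u
  b_le_one : ∀ v u, b v u ≤ 1
  row_sum : ∀ v, ∑ u, b v u = 1
  void_loop : b d d = 1

/-- The uniform probability measure on the interval `(0,1)`. -/
noncomputable def unifMeasure : Measure ℝ := volume.restrict (Set.Ioo (0:ℝ) 1)

/-- Product over `V` of uniform measures on `(0,1)`: the distribution of the thresholds. -/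
noncomputable def thresholdMeasure (V : Type*) [Fintype V] : Measure (V → ℝ) :=
  Measure.pi fun _ : V => unifMeasure

namespace InfoNetwork

variable {V : Type*} [Fintype V]

/-- The set of active nodes at time `t` under the non-progressive linear threshold model,
with transient initial set `A`, permanent initial set `Ahat` and thresholds `θ`. -/
noncomputable def activeSet (N : InfoNetwork V) (A Ahat : Set V) (θ : V → ℝ) : ℕ → Set V
  | 0 => A ∪ Ahat
  | t+1 => Ahat ∪
      {v | v ∉ Ahat ∧ θ v ≤ ∑ u, (N.activeSet A Ahat θ t).indicator (N.b v) u}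

/-- `E[X^t_v(A,Ahat)]`: the probability (over the random thresholds) that `v` is active
at time `t`. -/
noncomputable def EX (N : InfoNetwork V) (A Ahat : Set V) (t : ℕ) (v : V) : ℝ :=
  (thresholdMeasure V {θ | v ∈ N.activeSet A Ahat θ t}).toReal

/-- The expected influence over the period `[1,T]`. -/
noncomputable def sigmaBar (N : InfoNetwork V) (T : ℕ) (A Ahat : Set V) : ℝ :=
  (1 / (T : ℝ)) * ∑ t ∈ Finset.Icc 1 T, ∑ v, N.EX A Ahat t v

/-- The edge relation of the directed graph on `V \ {d}`. -/
def edgeRel (N : InfoNetwork V) (v u : V) : Prop :=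
  v ≠ N.d ∧ u ≠ N.d ∧ 0 < N.b v u

/-- The network is acyclic if the directed graph on `V \ {d}` has no directed cycle. -/
def Acyclic (N : InfoNetwork V) : Prop :=
  ∀ v, ¬ Relation.TransGen N.edgeRel v v

end InfoNetwork

/-- A real-valued set function `f` is submodular on the ground set `S`. -/
def SubmodularOn {V : Type*} (S : Set V) (f : Set V → ℝ) : Prop :=
  ∀ A B : Set V, A ⊆ B → B ⊆ S → ∀ w ∈ S, w ∉ B →
    f (insert w B) - f B ≤ f (insert w A) - f A

/-!
In an acyclic network the threshold of a node is independent of the states of the nodes it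
listens to, so the activation probabilities obey a linear recursion. Hence `σ̄` is jointly
monotone and submodular in the pair `(A, Â)` of transient and permanent seeds, and a permanent
seed is worth at least as much as a transient one.

For such objectives greedy loses at most a factor `2`. Each element of a feasible pair that
greedy did not choose is charged, by Hall's theorem, to its own greedy step at which it was still
a feasible choice (for a transient element any step does, a permanent one may be charged to a
step while permanent budget remains and before it was taken as transient). By submodularity and
greediness its marginal gain at the end is at most the gain of that step, so
`σ̄(A, Â) - σ̄(G, Ĝ) ≤ σ̄(G, Ĝ) - σ̄(∅, ∅)` for the greedy output `(G, Ĝ)`.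
-/

open Finset in
theorem exists_injOn_lt_of_card_filter_le {ι : Type*} (s : Finset ι) (c : ι → ℕ)
    (h : ∀ r, #{x ∈ s | c x ≤ r} ≤ r) : ∃ φ : ι → ℕ, Set.InjOn φ s ∧ ∀ x ∈ s, φ x < c x := by
  classical
  obtain ⟨ψ, hψ, hψc⟩ := (all_card_le_biUnion_card_iff_exists_injective
    fun x : s => range (c x)).1 fun t => by
      rcases t.eq_empty_or_nonempty with rfl | ht
      · simp
      obtain ⟨x, hxt, hx⟩ := t.exists_max_image (fun x => c x) ht
      calc #t ≤ #{y ∈ s | c y ≤ c x} :=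
            card_le_card_of_injOn Subtype.val (fun y hy => by simpa using hx y hy)
              Subtype.val_injective.injOn
        _ ≤ #(range (c x)) := by rw [card_range]; exact h _
        _ ≤ #(t.biUnion fun x => range (c x)) :=
            card_le_card (subset_biUnion_of_mem (fun x : s => range (c x)) hxt)
  refine ⟨fun x => if hx : x ∈ s then ψ ⟨x, hx⟩ else 0, fun x hx y hy hxy => ?_, fun x hx => ?_⟩
  · rw [Finset.mem_coe] at hx hy
    exact congrArg Subtype.val (hψ (by simpa [hx, hy] using hxy))
  · simpa [hx] using hψc ⟨x, hx⟩

theorem sum_le_sum_range_of_injOn {ι : Type*} {s : Finset ι} {φ : ι → ℕ} {m : ℕ}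
    (F : ι → ℝ) (Δ : ℕ → ℝ) (hφ : Set.InjOn φ s) (hφm : ∀ x ∈ s, φ x < m)
    (hF : ∀ x ∈ s, F x ≤ Δ (φ x)) (hΔ : ∀ i < m, 0 ≤ Δ i) :
    ∑ x ∈ s, F x ≤ ∑ i ∈ Finset.range m, Δ i := by
  classical
  calc ∑ x ∈ s, F x ≤ ∑ x ∈ s, Δ (φ x) := Finset.sum_le_sum hF
    _ = ∑ i ∈ s.image φ, Δ i := (Finset.sum_image hφ).symm
    _ ≤ ∑ i ∈ Finset.range m, Δ i :=
      Finset.sum_le_sum_of_subset_of_nonneg (by simpa [Finset.subset_iff] using hφm)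
        fun i hi _ => hΔ i (Finset.mem_range.1 hi)

theorem le_add_sum_of_marginal_le {V : Type*} (h : Set V → ℝ) (B : Set V) (c : V → ℝ)
    (D : Finset V) (hc : ∀ Y, B ⊆ Y → ∀ w ∈ D, h (insert w Y) - h Y ≤ c w) :
    h (B ∪ D) ≤ h B + ∑ w ∈ D, c w := by
  classical
  induction D using Finset.induction_on with
  | empty => simp
  | insert a D ha ih =>
    have hstep := hc (B ∪ D) Set.subset_union_left a (Finset.mem_insert_self a D)
    have := ih fun Y hY w hw => hc Y hY w (Finset.mem_insert_of_mem hw)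
    rw [Finset.coe_insert, Set.union_insert, Finset.sum_insert ha]
    linarith

/-- `f A Ah` is the value of the transient seeds `A` together with the permanent seeds `Ah`. -/
structure IsSubmodularPair {V : Type*} (f : Set V → Set V → ℝ) : Prop where
  mono ⦃A B Ah Bh : Set V⦄ : A ⊆ B → Ah ⊆ Bh → f A Ah ≤ f B Bh
  submodular_fst ⦃A B Ah Bh : Set V⦄ (w : V) : A ⊆ B → Ah ⊆ Bh →
    f (insert w B) Bh - f B Bh ≤ f (insert w A) Ah - f A Ah
  submodular_snd ⦃A B Ah Bh : Set V⦄ (w : V) : A ⊆ B → Ah ⊆ Bh →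
    f B (insert w Bh) - f B Bh ≤ f A (insert w Ah) - f A Ah
  insert_fst_le_insert_snd (A Ah : Set V) (w : V) : f (insert w A) Ah ≤ f A (insert w Ah)

namespace IsSubmodularPair

variable {V : Type*} {f : Set V → Set V → ℝ}

theorem insert_fst_of_mem_snd (hf : IsSubmodularPair f) {A Ah : Set V} {w : V} (hw : w ∈ Ah) :
    f (insert w A) Ah = f A Ah := by
  refine le_antisymm ?_ (hf.mono (Set.subset_insert w A) subset_rfl)
  simpa [Set.insert_eq_of_mem hw] using hf.insert_fst_le_insert_snd A Ah w

theorem sum {ι : Type*} (s : Finset ι) {f : ι → Set V → Set V → ℝ}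
    (hf : ∀ i ∈ s, IsSubmodularPair (f i)) :
    IsSubmodularPair fun A Ah => ∑ i ∈ s, f i A Ah where
  mono _ _ _ _ hA hAh := Finset.sum_le_sum fun i hi => (hf i hi).mono hA hAh
  submodular_fst _ _ _ _ w hA hAh := by
    simp only [← Finset.sum_sub_distrib]
    exact Finset.sum_le_sum fun i hi => (hf i hi).submodular_fst w hA hAh
  submodular_snd _ _ _ _ w hA hAh := by
    simp only [← Finset.sum_sub_distrib]
    exact Finset.sum_le_sum fun i hi => (hf i hi).submodular_snd w hA hAh
  insert_fst_le_insert_snd A Ah w :=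
    Finset.sum_le_sum fun i hi => (hf i hi).insert_fst_le_insert_snd A Ah w

theorem const_mul (hf : IsSubmodularPair f) {c : ℝ} (hc : 0 ≤ c) :
    IsSubmodularPair fun A Ah => c * f A Ah where
  mono _ _ _ _ hA hAh := mul_le_mul_of_nonneg_left (hf.mono hA hAh) hc
  submodular_fst _ _ _ _ w hA hAh := by
    simp only [← mul_sub]
    exact mul_le_mul_of_nonneg_left (hf.submodular_fst w hA hAh) hc
  submodular_snd _ _ _ _ w hA hAh := by
    simp only [← mul_sub]
    exact mul_le_mul_of_nonneg_left (hf.submodular_snd w hA hAh) hc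
  insert_fst_le_insert_snd A Ah w :=
    mul_le_mul_of_nonneg_left (hf.insert_fst_le_insert_snd A Ah w) hc

theorem le_add_sum_marginals (hf : IsSubmodularPair f) (G Gh : Set V) (D E : Finset V) :
    f (G ∪ D) (Gh ∪ E) ≤ f G Gh + ∑ a ∈ D, (f (insert a G) Gh - f G Gh)
      + ∑ b ∈ E, (f G (insert b Gh) - f G Gh) := by
  have hE := le_add_sum_of_marginal_le (f (G ∪ D)) Gh _ E
    fun Y hY b _ => hf.submodular_snd b Set.subset_union_left hY
  have hD := le_add_sum_of_marginal_le (f · Gh) G _ D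
    fun Y hY a _ => hf.submodular_fst a hY subset_rfl
  linarith

end IsSubmodularPair

structure IsGreedyRun {V : Type*} (f : Set V → Set V → ℝ) (S : Set V) (k khat : ℕ)
    (g : ℕ → Set V × Set V) (m : ℕ) : Prop where
  start : g 0 = (∅, ∅)
  step : ∀ i < m, ∃ w ∈ S, w ∉ (g i).1 ∪ (g i).2 ∧
    (((g i).1.ncard < k ∧ g (i + 1) = (insert w (g i).1, (g i).2)) ∨
     ((g i).2.ncard < khat ∧ g (i + 1) = ((g i).1, insert w (g i).2)))
  greedy : ∀ i < m, ∀ w ∈ S, w ∉ (g i).1 ∪ (g i).2 →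
    ((g i).1.ncard < k → f (insert w (g i).1) (g i).2 ≤ f (g (i + 1)).1 (g (i + 1)).2) ∧
    ((g i).2.ncard < khat → f (g i).1 (insert w (g i).2) ≤ f (g (i + 1)).1 (g (i + 1)).2)
  terminal : ¬ ∃ w ∈ S, w ∉ (g m).1 ∪ (g m).2 ∧ ((g m).1.ncard < k ∨ (g m).2.ncard < khat)

open Classical in
/-- The first step at which `b` can no longer be charged as a permanent addition: from then on
either the permanent budget is spent or `b` is already a transient seed. -/
noncomputable def permanentDeadline {V : Type*} (g : ℕ → Set V × Set V) (khat m : ℕ) (b : V) :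
    ℕ :=
  Nat.find (p := fun i => ¬ (i < m ∧ (g i).2.ncard < khat ∧ b ∉ (g i).1))
    ⟨m, fun h => h.1.false⟩

section permanentDeadline

variable {V : Type*} {g : ℕ → Set V × Set V} {khat m : ℕ} {b : V}

theorem permanentDeadline_le : permanentDeadline g khat m b ≤ m := by
  classical
  exact Nat.find_min' _ fun h => h.1.false

theorem lt_permanentDeadline {i : ℕ} (hi : i < permanentDeadline g khat m b) :
    i < m ∧ (g i).2.ncard < khat ∧ b ∉ (g i).1 := by
  classical
  exact not_not.1 (Nat.find_min _ hi)

theorem not_permanentDeadline :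
    ¬ (permanentDeadline g khat m b < m ∧ (g (permanentDeadline g khat m b)).2.ncard < khat ∧
      b ∉ (g (permanentDeadline g khat m b)).1) := by
  classical
  exact Nat.find_spec (p := fun i => ¬ (i < m ∧ (g i).2.ncard < khat ∧ b ∉ (g i).1)) _

end permanentDeadline

namespace IsGreedyRun

open Finset

variable {V : Type*} {f : Set V → Set V → ℝ} {S : Set V} {k khat m : ℕ}
  {g : ℕ → Set V × Set V}

theorem subset_succ (R : IsGreedyRun f S k khat g m) {i : ℕ} (hi : i < m) :
    (g i).1 ⊆ (g (i + 1)).1 ∧ (g i).2 ⊆ (g (i + 1)).2 := by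
  obtain ⟨w, -, -, ⟨-, h⟩ | ⟨-, h⟩⟩ := R.step i hi <;> rw [h]
  exacts [⟨Set.subset_insert _ _, subset_rfl⟩, ⟨subset_rfl, Set.subset_insert _ _⟩]

theorem subset_of_le (R : IsGreedyRun f S k khat g m) {i j : ℕ} (hij : i ≤ j) (hj : j ≤ m) :
    (g i).1 ⊆ (g j).1 ∧ (g i).2 ⊆ (g j).2 := by
  induction j, hij using Nat.le_induction with
  | base => exact ⟨subset_rfl, subset_rfl⟩
  | succ j _ ih =>
    obtain ⟨h1, h2⟩ := ih (by omega)
    obtain ⟨h3, h4⟩ := R.subset_succ (by omega : j < m)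
    exact ⟨h1.trans h3, h2.trans h4⟩

theorem subset_ground (R : IsGreedyRun f S k khat g m) {i : ℕ} (hi : i ≤ m) :
    (g i).1 ⊆ S ∧ (g i).2 ⊆ S := by
  induction i with
  | zero => simp [R.start]
  | succ i ih =>
    obtain ⟨h1, h2⟩ := ih (by omega)
    obtain ⟨w, hw, -, ⟨-, h⟩ | ⟨-, h⟩⟩ := R.step i (by omega) <;> rw [h]
    exacts [⟨Set.insert_subset hw h1, h2⟩, ⟨h1, Set.insert_subset hw h2⟩]

theorem ncard_add_ncard [Finite V] (R : IsGreedyRun f S k khat g m) {i : ℕ} (hi : i ≤ m) :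
    (g i).1.ncard + (g i).2.ncard = i := by
  induction i with
  | zero => simp [R.start]
  | succ i ih =>
    have := ih (by omega)
    obtain ⟨w, -, hw, ⟨-, h⟩ | ⟨-, h⟩⟩ := R.step i (by omega) <;>
      simp only [h, Set.mem_union, not_or] at hw ⊢
    · rw [Set.ncard_insert_of_notMem hw.1]; omega
    · rw [Set.ncard_insert_of_notMem hw.2]; omega

theorem ground_subset_or_le_ncard (R : IsGreedyRun f S k khat g m) :
    S ⊆ (g m).1 ∪ (g m).2 ∨ k ≤ (g m).1.ncard ∧ khat ≤ (g m).2.ncard := by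
  by_contra! h
  obtain ⟨w, hw, hw'⟩ := Set.not_subset.1 h.1
  exact R.terminal ⟨w, hw, hw', by omega⟩

theorem congr (R : IsGreedyRun f S k khat g m) {f' : Set V → Set V → ℝ}
    (h : ∀ A Ah, A ⊆ S → Ah ⊆ S → f A Ah = f' A Ah) : IsGreedyRun f' S k khat g m where
  start := R.start
  step := R.step
  greedy i hi w hw hw' := by
    obtain ⟨h1, h2⟩ := R.subset_ground hi.le
    obtain ⟨h1', h2'⟩ := R.subset_ground hi
    rw [← h _ _ (Set.insert_subset hw h1) h2, ← h _ _ h1 (Set.insert_subset hw h2),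
      ← h _ _ h1' h2']
    exact R.greedy i hi w hw hw'
  terminal := R.terminal

theorem value_le_value_succ (R : IsGreedyRun f S k khat g m) (hf : IsSubmodularPair f) {i : ℕ} (hi : i < m) :
    f (g i).1 (g i).2 ≤ f (g (i + 1)).1 (g (i + 1)).2 :=
  hf.mono (R.subset_succ hi).1 (R.subset_succ hi).2

theorem marginal_snd_le (R : IsGreedyRun f S k khat g m) (hf : IsSubmodularPair f)
    {i : ℕ} {b : V} (hi : i < m) (hb : b ∈ S) (hb1 : b ∉ (g i).1) (hb2 : b ∉ (g m).2)
    (hroom : (g i).2.ncard < khat) :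
    f (g m).1 (insert b (g m).2) - f (g m).1 (g m).2
      ≤ f (g (i + 1)).1 (g (i + 1)).2 - f (g i).1 (g i).2 := by
  obtain ⟨h1, h2⟩ := R.subset_of_le hi.le le_rfl
  have := hf.submodular_snd b h1 h2
  have := (R.greedy i hi b hb fun h => h.elim hb1 fun h => hb2 (h2 h)).2 hroom
  linarith

theorem marginal_fst_le (R : IsGreedyRun f S k khat g m) (hf : IsSubmodularPair f)
    {i : ℕ} {a : V} (hi : i < m) (ha : a ∈ S) (ha1 : a ∉ (g m).1) :
    f (insert a (g m).1) (g m).2 - f (g m).1 (g m).2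
      ≤ f (g (i + 1)).1 (g (i + 1)).2 - f (g i).1 (g i).2 := by
  by_cases ha2 : a ∈ (g m).2
  · rw [hf.insert_fst_of_mem_snd ha2, sub_self]
    exact sub_nonneg.2 (R.value_le_value_succ hf hi)
  obtain ⟨h1, h2⟩ := R.subset_of_le hi.le le_rfl
  have ha' : a ∉ (g i).1 ∪ (g i).2 := fun h => h.elim (fun h => ha1 (h1 h)) fun h => ha2 (h2 h)
  obtain ⟨w, -, -, ⟨hroom, -⟩ | ⟨hroom, -⟩⟩ := R.step i hi
  · have := hf.submodular_fst a h1 h2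
    have := (R.greedy i hi a ha ha').1 hroom
    linarith
  · -- step `i` was a permanent addition: compare with adding `a` permanently
    have := hf.insert_fst_le_insert_snd (g m).1 (g m).2 a
    have := R.marginal_snd_le hf hi ha (fun h => ha' (Or.inl h)) ha2 hroom
    linarith

theorem mem_fst_of_permanentDeadline_le (R : IsGreedyRun f S k khat g m) [Finite V]
    {r : ℕ} {b : V} (hr : r < m) (hroom : (g r).2.ncard < khat)
    (hb : permanentDeadline g khat m b ≤ r) : b ∈ (g r).1 := by
  obtain ⟨h1, h2⟩ := R.subset_of_le hb hr.le
  have := Set.ncard_le_ncard h2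
  by_contra hbr
  exact not_permanentDeadline ⟨by omega, by omega, fun h => hbr (h1 h)⟩

theorem card_filter_deadline_le [Finite V] (R : IsGreedyRun f S k khat g m) {D E : Finset V}
    (hcard : #D + #E ≤ m) (hE : #E ≤ khat) (r : ℕ) :
    #{x ∈ D.disjSum E | Sum.elim (fun _ => m) (permanentDeadline g khat m) x ≤ r} ≤ r := by
  rcases le_or_gt m r with hmr | hrm
  · exact (card_filter_le _ _).trans (by rw [card_disjSum]; omega)
  set u := {x ∈ D.disjSum E | Sum.elim (fun _ => m) (permanentDeadline g khat m) x ≤ r}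
  have hleft : u.toLeft = ∅ := by
    ext a
    simp only [u, mem_toLeft, mem_filter, Sum.elim_inl, notMem_empty, iff_false, not_and]
    omega
  have hsum := R.ncard_add_ncard hrm.le
  rw [← card_toLeft_add_card_toRight, hleft, card_empty, zero_add]
  by_cases hroom : (g r).2.ncard < khat
  · calc #u.toRight = (u.toRight : Set V).ncard := (Set.ncard_coe_finset _).symm
      _ ≤ (g r).1.ncard := Set.ncard_le_ncard fun b hb =>
          R.mem_fst_of_permanentDeadline_le hrm hroom (mem_filter.1 (mem_toRight.1 hb)).2
      _ ≤ r := by omega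
  · calc #u.toRight ≤ #E :=
          card_le_card fun b hb => inr_mem_disjSum.1 (mem_filter.1 (mem_toRight.1 hb)).1
      _ ≤ r := by omega

theorem sum_marginals_le [Finite V] (R : IsGreedyRun f S k khat g m) (hf : IsSubmodularPair f)
    {D E : Finset V} (hD : ∀ a ∈ D, a ∈ S ∧ a ∉ (g m).1) (hE : ∀ b ∈ E, b ∈ S ∧ b ∉ (g m).2)
    (hcard : #D + #E ≤ m) (hEk : #E ≤ khat) :
    ∑ a ∈ D, (f (insert a (g m).1) (g m).2 - f (g m).1 (g m).2)
      + ∑ b ∈ E, (f (g m).1 (insert b (g m).2) - f (g m).1 (g m).2)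
      ≤ f (g m).1 (g m).2 - f (g 0).1 (g 0).2 := by
  obtain ⟨φ, hφ, hφc⟩ := exists_injOn_lt_of_card_filter_le (D.disjSum E) _
    (R.card_filter_deadline_le hcard hEk)
  have hφm : ∀ x ∈ D.disjSum E, φ x < m := fun x hx =>
    (hφc x hx).trans_le (by cases x <;> simp [permanentDeadline_le])
  have key := sum_le_sum_range_of_injOn
    (Sum.elim (fun a => f (insert a (g m).1) (g m).2 - f (g m).1 (g m).2)
      fun b => f (g m).1 (insert b (g m).2) - f (g m).1 (g m).2)
    (fun i => f (g (i + 1)).1 (g (i + 1)).2 - f (g i).1 (g i).2) hφ hφm (fun x hx => ?_)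
    fun i hi => sub_nonneg.2 (R.value_le_value_succ hf hi)
  · rwa [sum_disjSum, sum_range_sub (fun i => f (g i).1 (g i).2)] at key
  rcases x with a | b
  · obtain ⟨ha, ha1⟩ := hD a (inl_mem_disjSum.1 hx)
    exact R.marginal_fst_le hf (hφm _ hx) ha ha1
  · obtain ⟨hb, hb2⟩ := hE b (inr_mem_disjSum.1 hx)
    obtain ⟨hi, hroom, hb1⟩ := lt_permanentDeadline (hφc _ hx)
    exact R.marginal_snd_le hf hi hb hb1 hb2 hroom

theorem ncard_diff_add_ncard_diff_le [Finite V] (R : IsGreedyRun f S k khat g m)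
    {A Ah : Set V} (hA : A ⊆ S) (hAh : Ah ⊆ S) (hk : A.ncard ≤ k) (hkh : Ah.ncard ≤ khat) :
    (A \ (g m).1).ncard + (Ah \ (g m).2).ncard ≤ m := by
  have hsum := R.ncard_add_ncard le_rfl
  rcases R.ground_subset_or_le_ncard with hS | ⟨hk', hkh'⟩
  · have h1 : A \ (g m).1 ⊆ (g m).2 := fun a ha => (hS (hA ha.1)).resolve_left ha.2
    have h2 : Ah \ (g m).2 ⊆ (g m).1 := fun b hb => (hS (hAh hb.1)).resolve_right hb.2
    have := Set.ncard_le_ncard h1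
    have := Set.ncard_le_ncard h2
    omega
  · have := Set.ncard_le_ncard (Set.sdiff_subset (s := A) (t := (g m).1))
    have := Set.ncard_le_ncard (Set.sdiff_subset (s := Ah) (t := (g m).2))
    omega

theorem add_le_two_mul [Finite V] (R : IsGreedyRun f S k khat g m) (hf : IsSubmodularPair f)
    {A Ah : Set V} (hA : A ⊆ S) (hAh : Ah ⊆ S) (hk : A.ncard ≤ k) (hkh : Ah.ncard ≤ khat) :
    f A Ah + f ∅ ∅ ≤ 2 * f (g m).1 (g m).2 := by
  obtain ⟨D, hD⟩ := (A \ (g m).1).toFinite.exists_finset_coe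
  obtain ⟨E, hE⟩ := (Ah \ (g m).2).toFinite.exists_finset_coe
  have hcard := R.ncard_diff_add_ncard_diff_le hA hAh hk hkh
  rw [← hD, ← hE, Set.ncard_coe_finset, Set.ncard_coe_finset] at hcard
  have hEk : #E ≤ khat := by
    rw [← Set.ncard_coe_finset, hE]
    exact (Set.ncard_le_ncard Set.sdiff_subset).trans hkh
  have hmono : f A Ah ≤ f ((g m).1 ∪ D) ((g m).2 ∪ E) := by
    rw [hD, hE, Set.union_sdiff_self, Set.union_sdiff_self]
    exact hf.mono Set.subset_union_right Set.subset_union_right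
  have hsum := R.sum_marginals_le hf (D := D) (E := E)
    (fun a ha => by rw [← mem_coe, hD] at ha; exact ⟨hA ha.1, ha.2⟩)
    (fun b hb => by rw [← mem_coe, hE] at hb; exact ⟨hAh hb.1, hb.2⟩) hcard hEk
  rw [R.start] at hsum
  linarith [hf.le_add_sum_marginals (g m).1 (g m).2 D E]

end IsGreedyRun

instance : IsProbabilityMeasure unifMeasure :=
  ⟨by simp [unifMeasure]⟩

instance (V : Type*) [Fintype V] : IsProbabilityMeasure (thresholdMeasure V) := by
  unfold thresholdMeasure; infer_instance

theorem unifMeasure_Iic {c : ℝ} (h1 : c ≤ 1) :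
    unifMeasure (Set.Iic c) = ENNReal.ofReal c := by
  rw [unifMeasure, Measure.restrict_apply measurableSet_Iic]
  refine le_antisymm ?_ ?_
  · calc volume (Set.Iic c ∩ Set.Ioo 0 1) ≤ volume (Set.Ioc 0 c) :=
          measure_mono fun x hx => ⟨hx.2.1, hx.1⟩
      _ = ENNReal.ofReal c := by simp
  · calc ENNReal.ofReal c = volume (Set.Ioo 0 c) := by simp
      _ ≤ volume (Set.Iic c ∩ Set.Ioo 0 1) :=
          measure_mono fun x hx => ⟨hx.2.le, hx.1, hx.2.trans_le h1⟩

/-- Integrating out `θ v` first, the inner integral is `unifMeasure (Iic (H θ)) = H θ`. -/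
theorem thresholdMeasure_le_eq_lintegral {V : Type*} [Fintype V] [DecidableEq V] {v : V}
    {H : (V → ℝ) → ℝ} (hH : Measurable H) (h1 : ∀ θ, H θ ≤ 1)
    (hv : ∀ θ r, H (Function.update θ v r) = H θ) :
    thresholdMeasure V {θ | θ v ≤ H θ} = ∫⁻ θ, ENNReal.ofReal (H θ) ∂thresholdMeasure V := by
  have hE : MeasurableSet {θ : V → ℝ | θ v ≤ H θ} := measurableSet_le (measurable_pi_apply v) hH
  rw [← lintegral_indicator_one hE, thresholdMeasure]
  refine lintegral_eq_of_lmarginal_eq {v} (measurable_one.indicator hE) hH.ennreal_ofReal ?_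
  ext θ
  have hslice : ∀ r, {θ : V → ℝ | θ v ≤ H θ}.indicator 1 (Function.update θ v r)
      = (Set.Iic (H θ)).indicator (1 : ℝ → ENNReal) r := fun r => by
    simp [Set.indicator_apply, hv]
  simp only [lmarginal_singleton, hslice, hv, lintegral_const, measure_univ, mul_one,
    lintegral_indicator_one measurableSet_Iic, unifMeasure_Iic (h1 θ)]

theorem thresholdMeasure_le_zero {V : Type*} [Fintype V] (v : V) :
    thresholdMeasure V {θ | θ v ≤ 0} = 0 := by
  classical
  simpa using thresholdMeasure_le_eq_lintegral (v := v) (H := fun _ => 0) measurable_const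
    (fun _ => zero_le_one) fun _ _ => rfl

namespace InfoNetwork

variable {V : Type*} [Fintype V] (N : InfoNetwork V)

theorem b_void_eq_zero {u : V} (hu : u ≠ N.d) : N.b N.d u = 0 := by
  classical
  have hsum := N.row_sum N.d
  rw [← Finset.add_sum_erase _ _ (Finset.mem_univ N.d), N.void_loop, add_eq_left] at hsum
  exact (Finset.sum_eq_zero_iff_of_nonneg fun x _ => N.b_nonneg N.d x).1 hsum u (by simp [hu])

theorem sum_b_mul_le_sum_b_mul {x y : V → ℝ} (h : ∀ u, x u ≤ y u) (v : V) :
    ∑ u, N.b v u * x u ≤ ∑ u, N.b v u * y u :=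
  Finset.sum_le_sum fun u _ => mul_le_mul_of_nonneg_left (h u) (N.b_nonneg v u)

theorem not_reflTransGen_void {v : V} (hv : v ≠ N.d) :
    ¬ Relation.ReflTransGen N.edgeRel N.d v := by
  intro h
  rcases h.cases_head with h | ⟨_, hd, _⟩
  exacts [hv h.symm, hd.1 rfl]

theorem not_reflTransGen_of_pos {u v w : V} (hv : v ≠ N.d) (hw : 0 < N.b u w)
    (hu : ¬ Relation.ReflTransGen N.edgeRel u v) : ¬ Relation.ReflTransGen N.edgeRel w v := by
  by_cases hwd : w = N.d
  · exact hwd ▸ N.not_reflTransGen_void hv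
  have hud : u ≠ N.d := by
    rintro rfl
    exact hw.ne' (N.b_void_eq_zero hwd)
  exact fun h => hu (Relation.ReflTransGen.head ⟨hud, hwd, hw⟩ h)

theorem Acyclic.not_reflTransGen {N : InfoNetwork V} (hN : N.Acyclic) {u v : V} (hv : v ≠ N.d)
    (hb : 0 < N.b v u) : ¬ Relation.ReflTransGen N.edgeRel u v := by
  by_cases hu : u = N.d
  · exact hu ▸ N.not_reflTransGen_void hv
  · exact fun h => hN v (Relation.TransGen.head' ⟨hv, hu, hb⟩ h)

theorem mem_activeSet_update [DecidableEq V] {A Ahat : Set V} {θ : V → ℝ} {v : V} (r : ℝ)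
    (hv : v ≠ N.d) (t : ℕ) {u : V} (hu : ¬ Relation.ReflTransGen N.edgeRel u v) :
    u ∈ N.activeSet A Ahat (Function.update θ v r) t ↔ u ∈ N.activeSet A Ahat θ t := by
  classical
  induction t generalizing u with
  | zero => rfl
  | succ t ih =>
    have huv : u ≠ v := fun h => hu (h ▸ Relation.ReflTransGen.refl)
    have hsum : ∑ w, (N.activeSet A Ahat (Function.update θ v r) t).indicator (N.b u) w
        = ∑ w, (N.activeSet A Ahat θ t).indicator (N.b u) w := by
      refine Finset.sum_congr rfl fun w _ => ?_
      rcases (N.b_nonneg u w).eq_or_lt with hw | hw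
      · simp only [Set.indicator_apply, ← hw, ite_self]
      · simp only [Set.indicator_apply, ih (N.not_reflTransGen_of_pos hv hw hu)]
    simp only [activeSet, Set.mem_union, Set.mem_ofPred_eq, Function.update_of_ne huv, hsum]

theorem measurableSet_mem_activeSet (A Ahat : Set V) (t : ℕ) (u : V) :
    MeasurableSet {θ : V → ℝ | u ∈ N.activeSet A Ahat θ t} := by
  induction t generalizing u with
  | zero => exact MeasurableSet.const _
  | succ t ih =>
    refine (MeasurableSet.const _).union ((MeasurableSet.const _).inter
      (measurableSet_le (measurable_pi_apply u) ?_))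
    exact Finset.measurable_sum _ fun w _ => Measurable.ite (ih w) measurable_const measurable_const

theorem void_notMem_activeSet {A Ahat : Set V} (hA : N.d ∉ A) (hAh : N.d ∉ Ahat) {θ : V → ℝ}
    (hθ : 0 < θ N.d) (t : ℕ) : N.d ∉ N.activeSet A Ahat θ t := by
  induction t with
  | zero => simp [activeSet, hA, hAh]
  | succ t ih =>
    have hsum : ∑ w, (N.activeSet A Ahat θ t).indicator (N.b N.d) w = 0 :=
      Finset.sum_eq_zero fun w _ => by
        by_cases hw : w = N.d
        · rw [hw]
          exact Set.indicator_of_notMem ih _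
        · simp [N.b_void_eq_zero hw]
    simp [activeSet, hAh, hsum, hθ]

open Classical in
/-- The activation probabilities of the NLT model, given by the linear recursion they satisfy
in an acyclic network. -/
noncomputable def activeProb (N : InfoNetwork V) (A Ahat : Set V) : ℕ → V → ℝ
  | 0, v => if v ∈ Ahat then 1 else A.indicator 1 v
  | t + 1, v => if v ∈ Ahat then 1 else ∑ u, N.b v u * N.activeProb A Ahat t u

section activeProb

variable {N} {A B Ah Bh : Set V} {v : V}

theorem activeProb_of_mem (h : v ∈ Ah) (t : ℕ) : N.activeProb A Ah t v = 1 := by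
  cases t <;> simp [activeProb, h]

theorem activeProb_zero_of_notMem (h : v ∉ Ah) : N.activeProb A Ah 0 v = A.indicator 1 v := by
  simp [activeProb, h]

theorem activeProb_succ_of_notMem (h : v ∉ Ah) (t : ℕ) :
    N.activeProb A Ah (t + 1) v = ∑ u, N.b v u * N.activeProb A Ah t u := by
  simp [activeProb, h]

variable (N) in
theorem activeProb_nonneg (A Ah : Set V) (t : ℕ) (v : V) : 0 ≤ N.activeProb A Ah t v := by
  induction t generalizing v with
  | zero =>
    unfold activeProb
    split_ifs
    exacts [zero_le_one, Set.indicator_nonneg (fun _ _ => zero_le_one) v]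
  | succ t ih =>
    unfold activeProb
    split_ifs
    exacts [zero_le_one, Finset.sum_nonneg fun u _ => mul_nonneg (N.b_nonneg v u) (ih u)]

variable (N) in
theorem activeProb_le_one (A Ah : Set V) (t : ℕ) (v : V) : N.activeProb A Ah t v ≤ 1 := by
  induction t generalizing v with
  | zero =>
    unfold activeProb
    split_ifs
    exacts [le_rfl, Set.indicator_le_self' (fun _ _ => zero_le_one) v]
  | succ t ih =>
    unfold activeProb
    split_ifs
    · exact le_rfl
    · calc ∑ u, N.b v u * N.activeProb A Ah t u ≤ ∑ u, N.b v u * 1 := N.sum_b_mul_le_sum_b_mul ih v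
        _ = 1 := by simp [N.row_sum v]

theorem activeProb_mono (hA : A ⊆ B) (hAh : Ah ⊆ Bh) (t : ℕ) (v : V) :
    N.activeProb A Ah t v ≤ N.activeProb B Bh t v := by
  induction t generalizing v with
  | zero =>
    by_cases hv : v ∈ Bh
    · exact (activeProb_of_mem hv 0).symm ▸ N.activeProb_le_one _ _ _ _
    rw [activeProb_zero_of_notMem hv, activeProb_zero_of_notMem fun h => hv (hAh h)]
    exact Set.indicator_le_indicator_of_subset hA (fun _ => zero_le_one) v
  | succ t ih =>
    by_cases hv : v ∈ Bh
    · exact (activeProb_of_mem hv _).symm ▸ N.activeProb_le_one _ _ _ _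
    rw [activeProb_succ_of_notMem hv, activeProb_succ_of_notMem fun h => hv (hAh h)]
    exact N.sum_b_mul_le_sum_b_mul ih v

theorem activeProb_submodular_fst (hA : A ⊆ B) (hAh : Ah ⊆ Bh) (w : V) (t : ℕ) (v : V) :
    N.activeProb (insert w B) Bh t v - N.activeProb B Bh t v
      ≤ N.activeProb (insert w A) Ah t v - N.activeProb A Ah t v := by
  classical
  have hhat : ∀ t v, v ∈ Bh → N.activeProb (insert w B) Bh t v - N.activeProb B Bh t v
      ≤ N.activeProb (insert w A) Ah t v - N.activeProb A Ah t v := fun t v hv => by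
    rw [activeProb_of_mem hv, activeProb_of_mem hv, sub_self, sub_nonneg]
    exact activeProb_mono (Set.subset_insert w A) subset_rfl t v
  induction t generalizing v with
  | zero =>
    by_cases hv : v ∈ Bh
    · exact hhat 0 v hv
    simp only [activeProb_zero_of_notMem hv, activeProb_zero_of_notMem fun h => hv (hAh h),
      Set.indicator_apply, Set.mem_insert_iff, Pi.one_apply]
    split_ifs <;> grind
  | succ t ih =>
    by_cases hv : v ∈ Bh
    · exact hhat _ v hv
    simp only [activeProb_succ_of_notMem hv, activeProb_succ_of_notMem fun h => hv (hAh h),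
      ← Finset.sum_sub_distrib, ← mul_sub]
    exact N.sum_b_mul_le_sum_b_mul ih v

theorem activeProb_submodular_snd (hA : A ⊆ B) (hAh : Ah ⊆ Bh) (w : V) (t : ℕ) (v : V) :
    N.activeProb B (insert w Bh) t v - N.activeProb B Bh t v
      ≤ N.activeProb A (insert w Ah) t v - N.activeProb A Ah t v := by
  have hhat : ∀ t v, v ∈ Bh ∨ v = w → N.activeProb B (insert w Bh) t v - N.activeProb B Bh t v
      ≤ N.activeProb A (insert w Ah) t v - N.activeProb A Ah t v := by
    rintro t v (hv | rfl)
    · rw [activeProb_of_mem hv, activeProb_of_mem (Set.mem_insert_of_mem _ hv), sub_self,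
        sub_nonneg]
      exact activeProb_mono subset_rfl (Set.subset_insert _ Ah) t _
    · rw [activeProb_of_mem (Set.mem_insert v Bh), activeProb_of_mem (Set.mem_insert v Ah)]
      linarith [activeProb_mono (N := N) hA hAh t v]
  induction t generalizing v with
  | zero =>
    by_cases hv : v ∈ Bh ∨ v = w
    · exact hhat 0 v hv
    obtain ⟨hvB, hvw⟩ := not_or.1 hv
    have hvA : v ∉ Ah := fun h => hvB (hAh h)
    rw [activeProb_zero_of_notMem hvB, activeProb_zero_of_notMem (by simp [hvB, hvw]),
      activeProb_zero_of_notMem hvA, activeProb_zero_of_notMem (by simp [hvA, hvw]), sub_self,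
      sub_self]
  | succ t ih =>
    by_cases hv : v ∈ Bh ∨ v = w
    · exact hhat _ v hv
    obtain ⟨hvB, hvw⟩ := not_or.1 hv
    have hvA : v ∉ Ah := fun h => hvB (hAh h)
    rw [activeProb_succ_of_notMem hvB, activeProb_succ_of_notMem (by simp [hvB, hvw]),
      activeProb_succ_of_notMem hvA, activeProb_succ_of_notMem (by simp [hvA, hvw])]
    simp only [← Finset.sum_sub_distrib, ← mul_sub]
    exact N.sum_b_mul_le_sum_b_mul ih v

theorem activeProb_insert_fst_le_insert_snd (A Ah : Set V) (w : V) (t : ℕ) (v : V) :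
    N.activeProb (insert w A) Ah t v ≤ N.activeProb A (insert w Ah) t v := by
  classical
  induction t generalizing v with
  | zero =>
    by_cases hv : v ∈ insert w Ah
    · exact (activeProb_of_mem hv 0).symm ▸ N.activeProb_le_one _ _ _ _
    have hvw : v ≠ w := fun h => hv (h ▸ Set.mem_insert v Ah)
    rw [activeProb_zero_of_notMem hv, activeProb_zero_of_notMem fun h => hv (Or.inr h)]
    simp [Set.indicator_apply, hvw]
  | succ t ih =>
    by_cases hv : v ∈ insert w Ah
    · exact (activeProb_of_mem hv _).symm ▸ N.activeProb_le_one _ _ _ _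
    rw [activeProb_succ_of_notMem hv, activeProb_succ_of_notMem fun h => hv (Or.inr h)]
    exact N.sum_b_mul_le_sum_b_mul ih v

variable (N) in
theorem isSubmodularPair_activeProb (t : ℕ) (v : V) :
    IsSubmodularPair fun A Ah => N.activeProb A Ah t v where
  mono _ _ _ _ hA hAh := activeProb_mono hA hAh t v
  submodular_fst _ _ _ _ w hA hAh := activeProb_submodular_fst hA hAh w t v
  submodular_snd _ _ _ _ w hA hAh := activeProb_submodular_snd hA hAh w t v
  insert_fst_le_insert_snd A Ah w := activeProb_insert_fst_le_insert_snd A Ah w t v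

theorem activeProb_void {A Ahat : Set V} (hA : N.d ∉ A) (hAh : N.d ∉ Ahat) (t : ℕ) :
    N.activeProb A Ahat t N.d = 0 := by
  induction t with
  | zero => rw [activeProb_zero_of_notMem hAh, Set.indicator_of_notMem hA]
  | succ t ih =>
    rw [activeProb_succ_of_notMem hAh]
    refine Finset.sum_eq_zero fun u _ => ?_
    by_cases hu : u = N.d
    · rw [hu, ih, mul_zero]
    · rw [N.b_void_eq_zero hu, zero_mul]

end activeProb

variable {N}

theorem measure_void_mem_activeSet {A Ahat : Set V} (hA : N.d ∉ A) (hAh : N.d ∉ Ahat) (t : ℕ) :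
    thresholdMeasure V {θ | N.d ∈ N.activeSet A Ahat θ t} = 0 := by
  have hsub : {θ | N.d ∈ N.activeSet A Ahat θ t} ⊆ {θ : V → ℝ | θ N.d ≤ 0} :=
    fun θ hθ => not_lt.1 fun h => N.void_notMem_activeSet hA hAh h t hθ
  exact measure_mono_null hsub (thresholdMeasure_le_zero N.d)

/-- In an acyclic network the weight of the active out-neighbours of `v` does not depend on
`θ v`, so the probability that `θ v` lies below it is its expectation. -/
theorem Acyclic.measure_mem_activeSet_succ (hN : N.Acyclic) {A Ahat : Set V} {v : V}
    (hvh : v ∉ Ahat) (hvd : v ≠ N.d) (t : ℕ) :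
    thresholdMeasure V {θ | v ∈ N.activeSet A Ahat θ (t + 1)}
      = ∑ u, ENNReal.ofReal (N.b v u) * thresholdMeasure V {θ | u ∈ N.activeSet A Ahat θ t} := by
  classical
  set H : (V → ℝ) → ℝ := fun θ => ∑ u, (N.activeSet A Ahat θ t).indicator (N.b v) u
  have hmeas : ∀ u, Measurable fun θ => (N.activeSet A Ahat θ t).indicator (N.b v) u :=
    fun u => Measurable.ite (N.measurableSet_mem_activeSet A Ahat t u) measurable_const
      measurable_const
  have hH1 : ∀ θ, H θ ≤ 1 := fun θ =>
    (Finset.sum_le_sum fun u _ => Set.indicator_le_self' (fun _ _ => N.b_nonneg v u) u).trans_eq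
      (N.row_sum v)
  have hHv : ∀ θ r, H (Function.update θ v r) = H θ := fun θ r =>
    Finset.sum_congr rfl fun u _ => by
      rcases (N.b_nonneg v u).eq_or_lt with hu | hu
      · simp only [Set.indicator_apply, ← hu, ite_self]
      · simp only [Set.indicator_apply,
          N.mem_activeSet_update r hvd t (hN.not_reflTransGen hvd hu)]
  have hset : {θ | v ∈ N.activeSet A Ahat θ (t + 1)} = {θ | θ v ≤ H θ} := by
    ext θ
    simp [activeSet, hvh, H]
  have hterm : ∀ u θ, ENNReal.ofReal ((N.activeSet A Ahat θ t).indicator (N.b v) u)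
      = {θ | u ∈ N.activeSet A Ahat θ t}.indicator (fun _ => ENNReal.ofReal (N.b v u)) θ :=
    fun u θ => by by_cases hu : u ∈ N.activeSet A Ahat θ t <;> simp [hu]
  rw [hset, thresholdMeasure_le_eq_lintegral (Finset.measurable_sum _ fun u _ => hmeas u) hH1 hHv]
  calc ∫⁻ θ, ENNReal.ofReal (H θ) ∂thresholdMeasure V
      = ∑ u, ∫⁻ θ, ENNReal.ofReal ((N.activeSet A Ahat θ t).indicator (N.b v) u)
          ∂thresholdMeasure V := by
        rw [← lintegral_finsetSum _ fun u _ => (hmeas u).ennreal_ofReal]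
        refine lintegral_congr fun θ => ENNReal.ofReal_sum_of_nonneg fun u _ => ?_
        exact Set.indicator_nonneg (fun _ _ => N.b_nonneg v u) u
    _ = _ := Finset.sum_congr rfl fun u _ => by
        rw [lintegral_congr (hterm u),
          lintegral_indicator_const (N.measurableSet_mem_activeSet A Ahat t u)]

theorem Acyclic.measure_mem_activeSet (hN : N.Acyclic) {A Ahat : Set V}
    (hA : A ⊆ {x | x ≠ N.d}) (hAh : Ahat ⊆ {x | x ≠ N.d}) (t : ℕ) (v : V) :
    thresholdMeasure V {θ | v ∈ N.activeSet A Ahat θ t}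
      = ENNReal.ofReal (N.activeProb A Ahat t v) := by
  classical
  have hdA : N.d ∉ A := fun h => hA h rfl
  have hdAh : N.d ∉ Ahat := fun h => hAh h rfl
  induction t generalizing v with
  | zero =>
    by_cases hvh : v ∈ Ahat <;> by_cases hvA : v ∈ A <;> simp [activeSet, activeProb, hvh, hvA]
  | succ t ih =>
    by_cases hvh : v ∈ Ahat
    · simp [activeSet, activeProb_of_mem hvh, hvh]
    by_cases hvd : v = N.d
    · rw [hvd, measure_void_mem_activeSet hdA hdAh, activeProb_void hdA hdAh, ENNReal.ofReal_zero]
    rw [hN.measure_mem_activeSet_succ hvh hvd, activeProb_succ_of_notMem hvh,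
      ENNReal.ofReal_sum_of_nonneg fun u _ =>
        mul_nonneg (N.b_nonneg v u) (N.activeProb_nonneg _ _ _ _)]
    exact Finset.sum_congr rfl fun u _ => by rw [ih, ENNReal.ofReal_mul (N.b_nonneg v u)]

variable (N) in
noncomputable def influence (T : ℕ) (A Ahat : Set V) : ℝ :=
  (1 / (T : ℝ)) * ∑ t ∈ Finset.Icc 1 T, ∑ v, N.activeProb A Ahat t v

theorem Acyclic.sigmaBar_eq_influence (hN : N.Acyclic) (T : ℕ) {A Ahat : Set V}
    (hA : A ⊆ {x | x ≠ N.d}) (hAh : Ahat ⊆ {x | x ≠ N.d}) :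
    N.sigmaBar T A Ahat = N.influence T A Ahat := by
  simp only [sigmaBar, influence, EX, hN.measure_mem_activeSet hA hAh,
    ENNReal.toReal_ofReal (N.activeProb_nonneg _ _ _ _)]

variable (N) in
theorem isSubmodularPair_influence (T : ℕ) : IsSubmodularPair (N.influence T) :=
  (IsSubmodularPair.sum _ fun t _ => IsSubmodularPair.sum _ fun v _ =>
    N.isSubmodularPair_activeProb t v).const_mul (by positivity)

variable (N) in
theorem sigmaBar_nonneg (T : ℕ) (A Ahat : Set V) : 0 ≤ N.sigmaBar T A Ahat :=
  mul_nonneg (by positivity)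
    (Finset.sum_nonneg fun _ _ => Finset.sum_nonneg fun _ _ => ENNReal.toReal_nonneg)

end InfoNetwork

theorem greedy_half_approximation_general {V : Type*} [Fintype V] (N : InfoNetwork V)
    (hacyc : N.Acyclic) (T : ℕ) (k khat : ℕ)
    (g : ℕ → Set V × Set V) (m : ℕ)
    (h0 : g 0 = (∅, ∅))
    -- each step adds one feasible node:
    (hstep : ∀ i < m, ∃ w : V, w ≠ N.d ∧ w ∉ (g i).1 ∪ (g i).2 ∧
      (((g i).1.ncard < k ∧ g (i + 1) = (insert w (g i).1, (g i).2)) ∨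
       ((g i).2.ncard < khat ∧ g (i + 1) = ((g i).1, insert w (g i).2))))
    -- the added node maximizes `σ̄` among all feasible single additions:
    (hgreedy : ∀ i < m, ∀ w' : V, w' ≠ N.d → w' ∉ (g i).1 ∪ (g i).2 →
      ((g i).1.ncard < k →
        N.sigmaBar T (insert w' (g i).1) (g i).2 ≤ N.sigmaBar T (g (i + 1)).1 (g (i + 1)).2) ∧
      ((g i).2.ncard < khat →
        N.sigmaBar T (g i).1 (insert w' (g i).2) ≤ N.sigmaBar T (g (i + 1)).1 (g (i + 1)).2))
    -- no feasible addition remains at the end: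
    (hstop : ¬ ∃ w : V, w ≠ N.d ∧ w ∉ (g m).1 ∪ (g m).2 ∧
      ((g m).1.ncard < k ∨ (g m).2.ncard < khat)) :
    ∀ A Ahat : Set V, A ⊆ {x : V | x ≠ N.d} → Ahat ⊆ {x : V | x ≠ N.d} →
      Disjoint A Ahat → A.ncard ≤ k → Ahat.ncard ≤ khat →
      N.sigmaBar T A Ahat ≤ 2 * N.sigmaBar T (g m).1 (g m).2 := by
  intro A Ahat hA hAhat _ hk hkhat
  have hS : ∀ A Ah, A ⊆ {x : V | x ≠ N.d} → Ah ⊆ {x : V | x ≠ N.d} →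
      N.sigmaBar T A Ah = N.influence T A Ah := fun _ _ => hacyc.sigmaBar_eq_influence T
  have R : IsGreedyRun (N.sigmaBar T) {x | x ≠ N.d} k khat g m := ⟨h0, hstep, hgreedy, hstop⟩
  have hgm := R.subset_ground le_rfl
  have key := (R.congr hS).add_le_two_mul (N.isSubmodularPair_influence T) hA hAhat hk hkhat
  rw [← hS _ _ hA hAhat, ← hS _ _ hgm.1 hgm.2,
    ← hS ∅ ∅ (Set.empty_subset _) (Set.empty_subset _)] at key
  linarith [N.sigmaBar_nonneg T ∅ ∅]

/-- in an acyclic network, any run of the Standard Greedy Algorithm with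
budgets `k` (transient) and `khat` (permanent) — starting from `(∅, ∅)`, at each step adding
one feasible node so as to maximize `σ̄` among all feasible single additions, and stopping
exactly when no feasible addition remains — produces a pair whose expected influence is at
least half the optimum over all disjoint feasible pairs. -/
theorem greedy_half_approximation {V : Type*} [Fintype V] (N : InfoNetwork V)
    (hacyc : N.Acyclic) (T : ℕ) (hT : 1 ≤ T) (k khat : ℕ)
    (g : ℕ → Set V × Set V) (m : ℕ)
    (hm : m ≤ min (k + khat) (Fintype.card V - 1))
    (h0 : g 0 = (∅, ∅))
    -- each step adds one feasible node:
    (hstep : ∀ i < m, ∃ w : V, w ≠ N.d ∧ w ∉ (g i).1 ∪ (g i).2 ∧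
      (((g i).1.ncard < k ∧ g (i + 1) = (insert w (g i).1, (g i).2)) ∨
       ((g i).2.ncard < khat ∧ g (i + 1) = ((g i).1, insert w (g i).2))))
    -- the added node maximizes `σ̄` among all feasible single additions:
    (hgreedy : ∀ i < m, ∀ w' : V, w' ≠ N.d → w' ∉ (g i).1 ∪ (g i).2 →
      ((g i).1.ncard < k →
        N.sigmaBar T (insert w' (g i).1) (g i).2 ≤ N.sigmaBar T (g (i + 1)).1 (g (i + 1)).2) ∧
      ((g i).2.ncard < khat →
        N.sigmaBar T (g i).1 (insert w' (g i).2) ≤ N.sigmaBar T (g (i + 1)).1 (g (i + 1)).2))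
    -- no feasible addition remains at the end:
    (hstop : ¬ ∃ w : V, w ≠ N.d ∧ w ∉ (g m).1 ∪ (g m).2 ∧
      ((g m).1.ncard < k ∨ (g m).2.ncard < khat)) :
    ∀ A Ahat : Set V, A ⊆ {x : V | x ≠ N.d} → Ahat ⊆ {x : V | x ≠ N.d} →
      Disjoint A Ahat → A.ncard ≤ k → Ahat.ncard ≤ khat →
      N.sigmaBar T A Ahat ≤ 2 * N.sigmaBar T (g m).1 (g m).2 :=
  greedy_half_approximation_general N hacyc T k khat g m h0 hstep hgreedy hstop
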